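/- Let λ > 0 and let x_t(i) ∈ ℝ^d for t ∈ [T], i ∈ [k] satisfy ‖x_t(i)‖₂ ≤ L. Define V_t = λI + Σ_{s=1}^t Σ_{i=1}^k x_s(i) x_s(i)ᵀ. Then the number of pairs (t,i) with x_t(i)ᵀ V_{t-1}^{-1} x_t(i) > 1/k is at most 2dk · log(1 + L²kT/(dλ)). -/

import Mathlib

/-!
Elliptical potential argument. Adding the round-`t` Gram matrix `M` to a positive definite `V`
multiplies the determinant by at least `1 + tr (V⁻¹ M) = 1 + ∑ᵢ xᵢᵀ V⁻¹ xᵢ`, and if `m` of the `k`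
widths exceed `1 / k` this sum exceeds `m / k ≤ 1`, so `log det` grows by at least `m / (2k)`.
Telescoping over the rounds, the number of large widths is at most `2k (log det V_T - log det V_0)`,
and AM-GM on the eigenvalues bounds `log det V_T` by `d log (tr V_T / d) ≤ d log (λ + L²kT / d)`.
-/

open Finset Matrix Real

theorem Real.le_two_mul_log_one_add {u : ℝ} (h0 : 0 ≤ u) (h1 : u ≤ 1) : u ≤ 2 * log (1 + u) :=
  calc u ≤ 2 * (2 * u / (u + 2)) := by
        rw [mul_div_assoc', le_div_iff₀ (by linarith)]
        nlinarith
    _ ≤ 2 * log (1 + u) := by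
        gcongr
        exact le_log_one_add_of_nonneg h0

theorem Finset.one_add_sum_le_prod_one_add {R ι : Type*} [CommSemiring R] [PartialOrder R]
    [IsOrderedRing R] (s : Finset ι) {f : ι → R} (hf : ∀ i ∈ s, 0 ≤ f i) :
    1 + ∑ i ∈ s, f i ≤ ∏ i ∈ s, (1 + f i) := by
  induction s using Finset.cons_induction with
  | empty => simp
  | cons a s _ ih =>
    rw [sum_cons, prod_cons]
    have hfa := hf a (mem_cons_self a s)
    have hfs : ∀ i ∈ s, 0 ≤ f i := fun i hi => hf i (mem_cons_of_mem hi)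
    calc 1 + (f a + ∑ i ∈ s, f i) ≤ 1 + (f a + ∑ i ∈ s, f i) + f a * ∑ i ∈ s, f i :=
          le_add_of_nonneg_right (mul_nonneg hfa (sum_nonneg hfs))
      _ = (1 + f a) * (1 + ∑ i ∈ s, f i) := by ring
      _ ≤ (1 + f a) * ∏ i ∈ s, (1 + f i) :=
          mul_le_mul_of_nonneg_left (ih hfs) (add_nonneg zero_le_one hfa)

namespace Matrix

variable {n : Type*} [Fintype n]

theorem trace_mul_sum_vecMulVec_self {ι : Type*} (A : Matrix n n ℝ) (s : Finset ι)
    (x : ι → n → ℝ) :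
    (A * ∑ i ∈ s, vecMulVec (x i) (x i)).trace = ∑ i ∈ s, x i ⬝ᵥ A *ᵥ x i := by
  simp only [mul_sum, trace_sum, mul_vecMulVec, trace_vecMulVec, dotProduct_comm]

theorem posSemidef_sum_vecMulVec_self {ι : Type*} (s : Finset ι) (x : ι → n → ℝ) :
    (∑ i ∈ s, vecMulVec (x i) (x i)).PosSemidef :=
  posSemidef_sum s fun i _ => by simpa using posSemidef_vecMulVec_self_star (x i)

variable [DecidableEq n]

theorem IsHermitian.det_one_add_eq_prod {N : Matrix n n ℝ} (hN : N.IsHermitian) :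
    (1 + N).det = ∏ i, (1 + hN.eigenvalues i) := by
  conv_lhs => rw [hN.spectral_theorem]
  rw [← map_one (Unitary.conjStarAlgAut ℝ _ hN.eigenvectorUnitary), ← map_add,
    Unitary.conjStarAlgAut_apply, det_mul_right_comm]
  simp [← diagonal_one, diagonal_add, det_diagonal]

theorem PosSemidef.one_add_trace_le_det_one_add {N : Matrix n n ℝ} (hN : N.PosSemidef) :
    1 + N.trace ≤ (1 + N).det := by
  rw [hN.1.det_one_add_eq_prod, hN.1.trace_eq_sum_eigenvalues]
  exact one_add_sum_le_prod_one_add _ fun i _ => hN.eigenvalues_nonneg i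

open scoped MatrixOrder in
theorem PosDef.exists_eq_star_mul_self {V : Matrix n n ℝ} (hV : V.PosDef) :
    ∃ u : (Matrix n n ℝ)ˣ, V = star (u : Matrix n n ℝ) * u := by
  obtain ⟨y, hy, rfl⟩ :=
    CStarAlgebra.isStrictlyPositive_iff_eq_star_mul_self.mp hV.isStrictlyPositive
  exact ⟨hy.unit, rfl⟩

theorem PosDef.det_mul_one_add_trace_le_det_add {V M : Matrix n n ℝ} (hV : V.PosDef)
    (hM : M.PosSemidef) : V.det * (1 + (V⁻¹ * M).trace) ≤ (V + M).det := by
  obtain ⟨u, hu⟩ := hV.exists_eq_star_mul_self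
  set B : Matrix n n ℝ := ↑u
  set C : Matrix n n ℝ := ↑u⁻¹
  have hBC : B * C = 1 := u.mul_inv
  have hCB : C * B = 1 := u.inv_mul
  set N := star C * M * C
  have hN : N.PosSemidef := by
    simpa [N, star_eq_conjTranspose] using hM.conjTranspose_mul_mul_same C
  have hsum : V + M = star B * (1 + N) * B := by
    have hstar : star B * star C = 1 := by rw [← star_mul, hCB, star_one]
    simp only [N, hu, Matrix.mul_add, Matrix.add_mul, Matrix.mul_one, ← Matrix.mul_assoc, hstar,
      Matrix.one_mul]
    rw [Matrix.mul_assoc M, hCB, Matrix.mul_one]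
  have hinv : V⁻¹ = C * star C := by
    refine inv_eq_left_inv ?_
    rw [hu, Matrix.mul_assoc, ← Matrix.mul_assoc (star C), ← star_mul, hBC, star_one,
      Matrix.one_mul, hCB]
  have hdet : (V + M).det = V.det * (1 + N).det := by
    rw [hsum, hu, det_mul, det_mul, det_mul]; ring
  have htrace : N.trace = (V⁻¹ * M).trace := by
    rw [hinv, trace_mul_cycle, Matrix.mul_assoc]
  rw [hdet, ← htrace]
  exact mul_le_mul_of_nonneg_left hN.one_add_trace_le_det_one_add hV.det_pos.le

theorem PosDef.log_det_le_card_mul_log_trace_div_card {A : Matrix n n ℝ} (hA : A.PosDef) :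
    log A.det ≤ Fintype.card n * log (A.trace / Fintype.card n) := by
  rcases isEmpty_or_nonempty n with hn | hn
  · simp
  have hc : (0 : ℝ) < Fintype.card n := by exact_mod_cast Fintype.card_pos
  have hjensen := strictConcaveOn_log_Ioi.concaveOn.le_map_sum (t := univ)
    (w := fun _ => (Fintype.card n : ℝ)⁻¹) (p := hA.1.eigenvalues) (fun _ _ => by positivity)
    (by simp [hc.ne']) (fun i _ => hA.eigenvalues_pos i)
  rw [hA.1.det_eq_prod_eigenvalues, hA.1.trace_eq_sum_eigenvalues]
  simp only [smul_eq_mul, ← mul_sum, RCLike.ofReal_real_eq_id, id] at hjensen ⊢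
  rw [log_prod fun i _ => (hA.eigenvalues_pos i).ne', div_eq_inv_mul]
  rwa [← div_le_iff₀' hc, div_eq_inv_mul]

theorem PosDef.log_det_sub_le [Nonempty n] {A : Matrix n n ℝ} (hA : A.PosDef) {lam c : ℝ}
    (hlam : 0 < lam) (htrace : A.trace ≤ Fintype.card n * lam + c) :
    log A.det - Fintype.card n * log lam ≤
      Fintype.card n * log (1 + c / (Fintype.card n * lam)) := by
  have hcard : (0 : ℝ) < Fintype.card n := by exact_mod_cast Fintype.card_pos
  have hmean : A.trace / Fintype.card n / lam ≤ 1 + c / (Fintype.card n * lam) := by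
    rw [div_div, div_le_iff₀ (by positivity), add_mul, one_mul, div_mul_cancel₀ _ (by positivity)]
    linarith
  have := hA.trace_pos
  calc log A.det - Fintype.card n * log lam
      ≤ Fintype.card n * log (A.trace / Fintype.card n) - Fintype.card n * log lam := by
        linarith [hA.log_det_le_card_mul_log_trace_div_card]
    _ = Fintype.card n * log (A.trace / Fintype.card n / lam) := by
        rw [log_div (by positivity) hlam.ne', mul_sub]
    _ ≤ Fintype.card n * log (1 + c / (Fintype.card n * lam)) := by gcongr

theorem PosDef.card_large_widths_le_log_det_add_sub {ι : Type*} {V : Matrix n n ℝ} (hV : V.PosDef)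
    (s : Finset ι) (x : ι → n → ℝ) :
    (#{i ∈ s | 1 / (#s : ℝ) < x i ⬝ᵥ V⁻¹ *ᵥ x i} : ℝ) ≤
      2 * #s * (log (V + ∑ i ∈ s, vecMulVec (x i) (x i)).det - log V.det) := by
  rcases s.eq_empty_or_nonempty with rfl | hs
  · simp
  set m := #{i ∈ s | 1 / (#s : ℝ) < x i ⬝ᵥ V⁻¹ *ᵥ x i}
  set M := ∑ i ∈ s, vecMulVec (x i) (x i)
  have hk : (0 : ℝ) < #s := by exact_mod_cast hs.card_pos
  have hwidth : ∀ i, 0 ≤ x i ⬝ᵥ V⁻¹ *ᵥ x i := fun i => by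
    simpa using hV.inv.posSemidef.dotProduct_mulVec_nonneg (x i)
  have hmean : (m : ℝ) / #s ≤ (V⁻¹ * M).trace := by
    rw [trace_mul_sum_vecMulVec_self, div_eq_mul_one_div, ← nsmul_eq_mul]
    refine (card_nsmul_le_sum _ _ _ fun i hi => (mem_filter.mp hi).2.le).trans ?_
    exact sum_le_sum_of_subset_of_nonneg (filter_subset _ _) fun i _ _ => hwidth i
  have hM : M.PosSemidef := posSemidef_sum_vecMulVec_self s x
  have hlog : (m : ℝ) / #s ≤ 2 * log (1 + m / #s) :=
    le_two_mul_log_one_add (by positivity)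
      (div_le_one_of_le₀ (by exact_mod_cast card_filter_le _ _) hk.le)
  have htrace : 0 ≤ (V⁻¹ * M).trace := (div_nonneg (Nat.cast_nonneg _) hk.le).trans hmean
  have hpot : log (1 + (V⁻¹ * M).trace) ≤ log (V + M).det - log V.det := by
    have hdet := hV.det_pos
    rw [le_sub_iff_add_le', ← log_mul hdet.ne' (by linarith)]
    exact log_le_log (mul_pos hdet (by linarith)) (hV.det_mul_one_add_trace_le_det_add hM)
  calc (m : ℝ) = #s * (m / #s) := by field_simp
    _ ≤ #s * (2 * log (1 + (V⁻¹ * M).trace)) := by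
      gcongr
      exact hlog.trans (by gcongr)
    _ = 2 * #s * log (1 + (V⁻¹ * M).trace) := by ring
    _ ≤ 2 * #s * (log (V + M).det - log V.det) := by gcongr

theorem card_large_widths_le_log_det_sub {ι : Type*} {V : ℕ → Matrix n n ℝ}
    (hV : ∀ t, (V t).PosDef) (s : Finset ι) (x : ℕ → ι → n → ℝ)
    (hstep : ∀ t, V (t + 1) = V t + ∑ i ∈ s, vecMulVec (x t i) (x t i)) (T : ℕ) :
    (#{p ∈ range T ×ˢ s | 1 / (#s : ℝ) < x p.1 p.2 ⬝ᵥ (V p.1)⁻¹ *ᵥ x p.1 p.2} : ℝ) ≤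
      2 * #s * (log (V T).det - log (V 0).det) := by
  have hcard : #{p ∈ range T ×ˢ s | 1 / (#s : ℝ) < x p.1 p.2 ⬝ᵥ (V p.1)⁻¹ *ᵥ x p.1 p.2} =
      ∑ t ∈ range T, #{i ∈ s | 1 / (#s : ℝ) < x t i ⬝ᵥ (V t)⁻¹ *ᵥ x t i} := by
    simp only [card_filter, sum_product]
  rw [hcard, Nat.cast_sum, ← sum_range_sub (fun t => log (V t).det), mul_sum]
  refine sum_le_sum fun t _ => ?_
  rw [hstep]
  exact (hV t).card_large_widths_le_log_det_add_sub s (x t)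

end Matrix

theorem count_large_widths_general {d k T : ℕ} (hd : 0 < d)
    (L lam : ℝ) (hlam : 0 < lam) (x : ℕ → ℕ → (Fin d → ℝ))
    (hL : ∀ t ∈ Finset.range T, ∀ i ∈ Finset.range k, Real.sqrt (∑ j, (x t i j) ^ 2) ≤ L)
    (V : ℕ → Matrix (Fin d) (Fin d) ℝ)
    (hV : ∀ t, V t = lam • (1 : Matrix (Fin d) (Fin d) ℝ) +
      ∑ s ∈ Finset.range t, ∑ i ∈ Finset.range k, vecMulVec (x s i) (x s i)) :
    (((Finset.range T ×ˢ Finset.range k).filter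
        (fun p => x p.1 p.2 ⬝ᵥ (V p.1)⁻¹ *ᵥ x p.1 p.2 > 1 / (k : ℝ))).card : ℝ) ≤
      2 * d * k * Real.log (1 + L ^ 2 * k * T / (d * lam)) := by
  have hVpos : ∀ t, (V t).PosDef := fun t => hV t ▸ (PosDef.one.smul hlam).add_posSemidef
    (posSemidef_sum _ fun s _ => posSemidef_sum_vecMulVec_self _ (x s))
  have hstep : ∀ t, V (t + 1) = V t + ∑ i ∈ range k, vecMulVec (x t i) (x t i) := fun t => by
    rw [hV, hV, sum_range_succ, add_assoc]
  have hdet0 : log (V 0).det = d * log lam := by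
    simp [hV 0]
  have htrace : (V T).trace ≤ d * lam + L ^ 2 * k * T := by
    have hnorm : ∀ t ∈ range T, ∀ i ∈ range k, x t i ⬝ᵥ x t i ≤ L ^ 2 := fun t ht i hi => by
      simpa [dotProduct, sq] using (sqrt_le_iff.mp (hL t ht i hi)).2
    have hsum := sum_le_sum fun t ht => sum_le_sum (hnorm t ht)
    simp only [sum_const, card_range, nsmul_eq_mul] at hsum
    simp only [hV T, trace_add, trace_smul, trace_one, Fintype.card_fin, smul_eq_mul, trace_sum,
      trace_vecMulVec]
    linarith
  have hdetT : log (V T).det - log (V 0).det ≤ d * log (1 + L ^ 2 * k * T / (d * lam)) := by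
    have : Nonempty (Fin d) := Fin.pos_iff_nonempty.mp hd
    simpa [hdet0] using (hVpos T).log_det_sub_le hlam (by simpa using htrace)
  have hpot := card_large_widths_le_log_det_sub hVpos (range k) x hstep T
  simp only [card_range, gt_iff_lt] at hpot ⊢
  calc _ ≤ 2 * k * (log (V T).det - log (V 0).det) := hpot
    _ ≤ 2 * k * (d * log (1 + L ^ 2 * k * T / (d * lam))) := by gcongr
    _ = _ := by ring

theorem count_large_widths {d k T : ℕ} (hd : 0 < d) (hk : 0 < k)
    (L lam : ℝ) (hlam : 0 < lam) (x : ℕ → ℕ → (Fin d → ℝ))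
    (hL : ∀ t ∈ Finset.range T, ∀ i ∈ Finset.range k, Real.sqrt (∑ j, (x t i j) ^ 2) ≤ L)
    (V : ℕ → Matrix (Fin d) (Fin d) ℝ)
    (hV : ∀ t, V t = lam • (1 : Matrix (Fin d) (Fin d) ℝ) +
      ∑ s ∈ Finset.range t, ∑ i ∈ Finset.range k, vecMulVec (x s i) (x s i)) :
    (((Finset.range T ×ˢ Finset.range k).filter
        (fun p => x p.1 p.2 ⬝ᵥ (V p.1)⁻¹ *ᵥ x p.1 p.2 > 1 / (k : ℝ))).card : ℝ) ≤
      2 * d * k * Real.log (1 + L ^ 2 * k * T / (d * lam)) :=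
  count_large_widths_general hd L lam hlam x hL V hV
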